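/- arXiv:math/0608795 — 2 statements merged into one kernel-verified Lean document; each statement's English description precedes it below -/
import Mathlib

section
/- Let f : ℝⁿ → ℝ be smooth with f ≡ 0 outside a ball B_{1+ε}(0) and f(x) = -exp(-2d/dist(x, ∂B_{1+ε})) on an ε-neighborhood U_ε(∂B) of the unit sphere inside the unit ball. Then for all sufficiently large d > 0, the conformal metric e^{2f}·g_Eucl has positive scalar curvature on U_ε(∂B) and equals g_Eucl outside B_{1+ε}(0). -/
/-!
Inside `B_{1+ε}` the conformal factor is radial, `f(x) = φ(‖x‖)` with `φ(r) = -exp(-c/t)`,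
`c = 2d`, `t = 1 + ε - r`. For radial functions `Δf = φ'' + (n-1)φ'/r` and `|∇f|² = φ'²`, and with
`E = exp(-c/t)` one gets
`-2(n-1)Δf - (n-1)(n-2)|∇f|² = (n-1)(cE/t⁴)(2(c - 2t) - 2(n-1)t²/r - (n-2)cE)`.
Since `x e^{-x} ≤ 1`, `cE ≤ t`, so the last factor is at least `2c - (n+2)t - 2(n-1)t²/r`;
on the shell `1 - ε < r < 1` we have `t < 2ε` and `r > 1 - ε`, so this is positive once `d` is large.
-/

noncomputable section

open MeasureTheory Filter

/-- Euclidean n-space. -/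
abbrev Euc (n : ℕ) := EuclideanSpace ℝ (Fin n)

/-- Partial derivative in the i-th coordinate direction. -/
def pd {n : ℕ} (f : Euc n → ℝ) (i : Fin n) (x : Euc n) : ℝ :=
  fderiv ℝ f x (EuclideanSpace.single i 1)

/-- Euclidean Laplacian. -/
def eucLap {n : ℕ} (f : Euc n → ℝ) (x : Euc n) : ℝ :=
  ∑ i, pd (pd f i) i x

/-- Squared norm of the Euclidean gradient. -/
def eucGradSq {n : ℕ} (f : Euc n → ℝ) (x : Euc n) : ℝ :=
  ∑ i, (pd f i x) ^ 2

/-- The conformal factor exponent of Lemma 2.2: `f ≡ 0` outside `B_{1+ε}(0)` and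
`f(x) = -exp(-2d/dist(x,∂B_{1+ε}))` inside. -/
def fconf (n : ℕ) (ε d : ℝ) (x : Euc n) : ℝ :=
  if ‖x‖ < 1 + ε then -Real.exp (-(2 * d) / (1 + ε - ‖x‖)) else 0

open Real Set Topology

theorem hasFDerivAt_norm {F : Type*} [NormedAddCommGroup F] [InnerProductSpace ℝ F] {x : F}
    (hx : x ≠ 0) : HasFDerivAt (fun y : F => ‖y‖) (‖x‖⁻¹ • innerSL ℝ x) x := by
  have hsqrt := (hasStrictFDerivAt_norm_sq x).hasFDerivAt.sqrt (by positivity)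
  simp only [sqrt_sq (norm_nonneg _)] at hsqrt
  convert hsqrt using 1
  ext v
  simp only [smul_apply, coe_innerSL_apply, smul_eq_mul, one_div, mul_inv_rev,
    nsmul_eq_mul, Nat.cast_ofNat]
  field_simp

theorem HasDerivAt.hasFDerivAt_comp_norm {F : Type*} [NormedAddCommGroup F]
    [InnerProductSpace ℝ F] {g : ℝ → ℝ} {g' : ℝ} {x : F} (hx : x ≠ 0) (hg : HasDerivAt g g' ‖x‖) :
    HasFDerivAt (fun y => g ‖y‖) ((g' * ‖x‖⁻¹) • innerSL ℝ x) x := by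
  simpa [Function.comp_def, smul_smul] using hg.comp_hasFDerivAt x (hasFDerivAt_norm hx)

section Radial

variable {n : ℕ}

theorem pd_congr {f g : Euc n → ℝ} {x : Euc n} (h : f =ᶠ[𝓝 x] g) (i : Fin n) :
    pd f i x = pd g i x := by
  rw [pd, pd, h.fderiv_eq]

theorem pd_comp_norm {g : ℝ → ℝ} {g' : ℝ} {x : Euc n} (hx : x ≠ 0) (hg : HasDerivAt g g' ‖x‖)
    (i : Fin n) : pd (fun y => g ‖y‖) i x = g' * ‖x‖⁻¹ * x i := by
  rw [pd, (hg.hasFDerivAt_comp_norm hx).fderiv]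
  simp [EuclideanSpace.inner_single_right, mul_assoc]

theorem pd_comp_norm_mul_apply {g : ℝ → ℝ} {g' : ℝ} {x : Euc n} (hx : x ≠ 0)
    (hg : HasDerivAt g g' ‖x‖) (i : Fin n) :
    pd (fun y => g ‖y‖ * y i) i x = g' * ‖x‖⁻¹ * x i ^ 2 + g ‖x‖ := by
  have hprod : HasFDerivAt (fun y : Euc n => g ‖y‖ * y i)
      (g ‖x‖ • EuclideanSpace.proj i + x i • (g' * ‖x‖⁻¹) • innerSL ℝ x) x :=
    (hg.hasFDerivAt_comp_norm hx).mul ((EuclideanSpace.proj (𝕜 := ℝ) i).hasFDerivAt (x := x))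
  rw [pd, hprod.fderiv]
  simp only [add_apply, smul_apply, PiLp.proj_apply, PiLp.single_eq_same, smul_eq_mul, mul_one,
    coe_innerSL_apply, EuclideanSpace.inner_single_right, ringHom_apply, one_mul]
  ring

variable {f : Euc n → ℝ} {φ φ' φ'' : ℝ → ℝ} {s : Set ℝ}

theorem eventuallyEq_of_radial (hs : IsOpen s) (hf : ∀ y, ‖y‖ ∈ s → f y = φ ‖y‖) {x : Euc n}
    (hx : ‖x‖ ∈ s) : f =ᶠ[𝓝 x] fun y => φ ‖y‖ :=
  eventually_of_mem ((hs.preimage continuous_norm).mem_nhds hx) hf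

theorem pd_of_radial (hs : IsOpen s) (hs0 : (0 : ℝ) ∉ s) (hf : ∀ y, ‖y‖ ∈ s → f y = φ ‖y‖)
    (hφ : ∀ r ∈ s, HasDerivAt φ (φ' r) r) {x : Euc n} (hx : ‖x‖ ∈ s) (i : Fin n) :
    pd f i x = φ' ‖x‖ * ‖x‖⁻¹ * x i := by
  have hx0 : x ≠ 0 := by rintro rfl; exact hs0 (by simpa using hx)
  rw [pd_congr (eventuallyEq_of_radial hs hf hx), pd_comp_norm hx0 (hφ _ hx)]

theorem eucGradSq_of_radial (hs : IsOpen s) (hs0 : (0 : ℝ) ∉ s)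
    (hf : ∀ y, ‖y‖ ∈ s → f y = φ ‖y‖) (hφ : ∀ r ∈ s, HasDerivAt φ (φ' r) r) {x : Euc n}
    (hx : ‖x‖ ∈ s) : eucGradSq f x = φ' ‖x‖ ^ 2 := by
  have hx0 : ‖x‖ ≠ 0 := by rintro h; exact hs0 (h ▸ hx)
  simp only [eucGradSq, pd_of_radial hs hs0 hf hφ hx, mul_pow, ← Finset.mul_sum,
    ← EuclideanSpace.real_norm_sq_eq]
  field_simp

theorem eucLap_of_radial (hs : IsOpen s) (hs0 : (0 : ℝ) ∉ s)
    (hf : ∀ y, ‖y‖ ∈ s → f y = φ ‖y‖) (hφ : ∀ r ∈ s, HasDerivAt φ (φ' r) r)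
    (hφ' : ∀ r ∈ s, HasDerivAt φ' (φ'' r) r) {x : Euc n} (hx : ‖x‖ ∈ s) :
    eucLap f x = φ'' ‖x‖ + (n - 1) * φ' ‖x‖ / ‖x‖ := by
  have hx0 : x ≠ 0 := by rintro rfl; exact hs0 (by simpa using hx)
  have hr0 : ‖x‖ ≠ 0 := norm_ne_zero_iff.2 hx0
  have hψ : HasDerivAt (fun r => φ' r * r⁻¹)
      (φ'' ‖x‖ * ‖x‖⁻¹ + φ' ‖x‖ * -(‖x‖ ^ 2)⁻¹) ‖x‖ :=
    (hφ' _ hx).mul (hasDerivAt_inv hr0)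
  have hpd (i : Fin n) : pd f i =ᶠ[𝓝 x] fun y => φ' ‖y‖ * ‖y‖⁻¹ * y i :=
    eventually_of_mem ((hs.preimage continuous_norm).mem_nhds hx)
      fun y hy => pd_of_radial hs hs0 hf hφ hy i
  rw [eucLap, Finset.sum_congr rfl fun i _ =>
    (pd_congr (hpd i) i).trans (pd_comp_norm_mul_apply hx0 hψ i)]
  rw [Finset.sum_add_distrib, ← Finset.mul_sum, ← EuclideanSpace.real_norm_sq_eq,
    Finset.sum_const, Finset.card_univ, Fintype.card_fin, nsmul_eq_mul]
  field_simp
  ring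

end Radial

section Barrier

variable {c R r : ℝ}

def barrier (c R r : ℝ) : ℝ := -exp (-c / (R - r))

def barrierDeriv (c R r : ℝ) : ℝ := c / (R - r) ^ 2 * exp (-c / (R - r))

def barrierDeriv2 (c R r : ℝ) : ℝ := c * (2 * (R - r) - c) / (R - r) ^ 4 * exp (-c / (R - r))

theorem hasDerivAt_barrier_exponent (h : r < R) :
    HasDerivAt (fun r => -c / (R - r)) (-c / (R - r) ^ 2) r := by
  have hR : R - r ≠ 0 := sub_ne_zero.2 h.ne'
  refine ((hasDerivAt_const r (-c)).div ((hasDerivAt_id' r).const_sub R) hR).congr_deriv ?_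
  ring

theorem hasDerivAt_barrier (h : r < R) : HasDerivAt (barrier c R) (barrierDeriv c R r) r := by
  refine (hasDerivAt_barrier_exponent h).exp.neg.congr_deriv ?_
  rw [barrierDeriv]
  ring

theorem hasDerivAt_barrierDeriv (h : r < R) :
    HasDerivAt (barrierDeriv c R) (barrierDeriv2 c R r) r := by
  have hR : R - r ≠ 0 := sub_ne_zero.2 h.ne'
  have hsq : HasDerivAt (fun r => (R - r) ^ 2) (2 * (R - r) * -1) r := by
    simpa using ((hasDerivAt_id' r).const_sub R).fun_pow 2
  refine (((hasDerivAt_const r c).div hsq (pow_ne_zero 2 hR)).mul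
    (hasDerivAt_barrier_exponent h).exp).congr_deriv ?_
  rw [barrierDeriv2, Pi.div_apply]
  field_simp
  ring

end Barrier

theorem mul_exp_neg_div_le (c : ℝ) {t : ℝ} (ht : 0 < t) : c * exp (-c / t) ≤ t := by
  have hle : c / t * exp (-(c / t)) ≤ 1 := by
    rw [exp_neg, ← div_eq_mul_inv, div_le_one (exp_pos _)]
    linarith [add_one_le_exp (c / t)]
  calc c * exp (-c / t) = t * (c / t * exp (-(c / t))) := by rw [neg_div]; field_simp
    _ ≤ t * 1 := by gcongr
    _ = t := mul_one t

theorem barrier_scal_pos {N c R r : ℝ} (hN : 2 ≤ N) (hr : 0 < r) (hrR : r < R)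
    (hc : (N + 2) * (R - r) + 2 * (N - 1) * (R - r) ^ 2 / r < 2 * c) :
    0 < -(2 * (N - 1)) * (barrierDeriv2 c R r + (N - 1) * barrierDeriv c R r / r)
        - (N - 1) * (N - 2) * barrierDeriv c R r ^ 2 := by
  have hfactor : -(2 * (N - 1)) * (barrierDeriv2 c R r + (N - 1) * barrierDeriv c R r / r)
        - (N - 1) * (N - 2) * barrierDeriv c R r ^ 2
      = (N - 1) * (c * exp (-c / (R - r)) / (R - r) ^ 4) * (2 * (c - 2 * (R - r))
          - 2 * (N - 1) * (R - r) ^ 2 / r - (N - 2) * (c * exp (-c / (R - r)))) := by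
    have : R - r ≠ 0 := sub_ne_zero.2 hrR.ne'
    simp only [barrierDeriv, barrierDeriv2]
    field_simp
    ring
  rw [hfactor]
  set t := R - r
  have ht : 0 < t := sub_pos.2 hrR
  have hc0 : 0 < c := by
    have : 0 ≤ 2 * (N - 1) * t ^ 2 / r := by
      apply div_nonneg _ hr.le
      nlinarith
    nlinarith
  have hcE : (N - 2) * (c * exp (-c / t)) ≤ (N - 2) * t :=
    mul_le_mul_of_nonneg_left (mul_exp_neg_div_le c ht) (by linarith)
  refine mul_pos (mul_pos (by linarith) (by positivity)) ?_
  linarith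

theorem stmt0_general (n : ℕ) (hn : 3 ≤ n) (ε : ℝ) (hε1 : ε < 1) :
    ∃ d₀ : ℝ, ∀ d : ℝ, d₀ ≤ d →
      (∀ x : Euc n, 1 - ε < ‖x‖ → ‖x‖ < 1 →
        0 < Real.exp (-2 * fconf n ε d x) *
          (-(2 * ((n : ℝ) - 1)) * eucLap (fconf n ε d) x
            - ((n : ℝ) - 1) * ((n : ℝ) - 2) * eucGradSq (fconf n ε d) x)) ∧
      (∀ x : Euc n, 1 + ε ≤ ‖x‖ → fconf n ε d x = 0) := by
  refine ⟨((n + 2) * ε + 4 * (n - 1) * ε ^ 2 / (1 - ε)) / 2, fun d hd =>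
    ⟨fun x hx₁ hx₂ => ?_, fun x hx => if_neg hx.not_gt⟩⟩
  have hN : (2 : ℝ) ≤ n := by exact_mod_cast (by omega : 2 ≤ n)
  have hs0 : (0 : ℝ) ∉ Ioo 0 (1 + ε) := fun h => lt_irrefl 0 h.1
  have hprofile (y : Euc n) (hy : ‖y‖ ∈ Ioo 0 (1 + ε)) :
      fconf n ε d y = barrier (2 * d) (1 + ε) ‖y‖ := if_pos hy.2
  have hφ (r : ℝ) (hr : r ∈ Ioo 0 (1 + ε)) := hasDerivAt_barrier (c := 2 * d) hr.2
  have hφ' (r : ℝ) (hr : r ∈ Ioo 0 (1 + ε)) := hasDerivAt_barrierDeriv (c := 2 * d) hr.2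
  have hx : ‖x‖ ∈ Ioo 0 (1 + ε) := ⟨by linarith, by linarith⟩
  rw [eucLap_of_radial isOpen_Ioo hs0 hprofile hφ hφ' hx,
    eucGradSq_of_radial isOpen_Ioo hs0 hprofile hφ hx]
  refine mul_pos (exp_pos _) (barrier_scal_pos hN hx.1 hx.2 ?_)
  have hshell :
      2 * (n - 1) * (1 + ε - ‖x‖) ^ 2 / ‖x‖ < 2 * (n - 1) * (2 * ε) ^ 2 / (1 - ε) := by
    gcongr <;> nlinarith
  have hwidth : (n + 2) * (1 + ε - ‖x‖) < (n + 2) * (2 * ε) := by gcongr; linarith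
  linarith [show 2 * (n - 1) * (2 * ε) ^ 2 / (1 - ε) = 2 * (4 * (n - 1) * ε ^ 2 / (1 - ε)) by ring]

/-- for all sufficiently large `d`, the conformal metric `e^{2f}·g_Eucl`
(whose scalar curvature is `e^{-2f}(-2(n-1)Δf - (n-1)(n-2)|∇f|²)`, since `Scal(g_Eucl)=0`)
has positive scalar curvature on the ε-neighborhood `{1-ε < ‖x‖ < 1}` of the unit sphere
inside the unit ball, and equals `g_Eucl` outside `B_{1+ε}(0)` (i.e. `f = 0` there). -/
theorem stmt0 (n : ℕ) (hn : 3 ≤ n) (ε : ℝ) (hε : 0 < ε) (hε1 : ε < 1) :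
    ∃ d₀ : ℝ, ∀ d : ℝ, d₀ ≤ d →
      (∀ x : Euc n, 1 - ε < ‖x‖ → ‖x‖ < 1 →
        0 < Real.exp (-2 * fconf n ε d x) *
          (-(2 * ((n : ℝ) - 1)) * eucLap (fconf n ε d) x
            - ((n : ℝ) - 1) * ((n : ℝ) - 2) * eucGradSq (fconf n ε d) x)) ∧
      (∀ x : Euc n, 1 + ε ≤ ‖x‖ → fconf n ε d x = 0) :=
  stmt0_general n hn ε hε1
end
end

section
/- Let f : ℝ^m → ℝ^n be a Lipschitz map, A ⊆ ℝ^m a Borel set, and k ≥ 0. Then ∫_{ℝ^n} #{x ∈ A : f(x) = y} dH^k(y) ≤ Lip(f)^k · H^k(A), where H^k denotes k-dimensional Hausdorff measure and #S denotes cardinality (with value ∞ allowed). -/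
noncomputable section

open MeasureTheory
open scoped ENNReal NNReal

/-!
At scale `j`, cut `A` along the grid of cubes of side `1 / j` into countably many pieces `Pᵢ`.
The cover count `y ↦ #{i | y ∈ f '' Pᵢ}` (with `f '' Pᵢ` replaced by a measurable hull) has
integral `∑ᵢ H^k(f '' Pᵢ) ≤ Lip(f)^k ∑ᵢ H^k(Pᵢ) = Lip(f)^k H^k(A)`. Since the grids
eventually separate any finitely many points, the liminf of the cover counts dominates
`#(A ∩ f ⁻¹' {y})`, and Fatou's lemma concludes.
-/

open Filter Set

section FiberCount

variable {X Y ι κ : Type*} {l : Filter κ}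

theorem eventually_injOn_of_pairwise_eventually_ne {c : κ → X → ι}
    (hc : Pairwise fun x x' => ∀ᶠ j in l, c j x ≠ c j x') {t : Set X} (ht : t.Finite) :
    ∀ᶠ j in l, t.InjOn (c j) := by
  have hpairs : ∀ᶠ j in l, ∀ x ∈ t, ∀ x' ∈ t, x ≠ x' → c j x ≠ c j x' := by
    refine (eventually_all_finite ht).2 fun x _ => (eventually_all_finite ht).2 fun x' _ => ?_
    rcases eq_or_ne x x' with rfl | hne
    · exact Eventually.of_forall fun _ h => absurd rfl h
    · exact (hc hne).mono fun _ h _ => h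
  filter_upwards [hpairs] with j hj x hx x' hx' hxx'
  by_contra hne
  exact hj x hx x' hx' hne hxx'

theorem encard_le_liminf_encard_image {c : κ → X → ι}
    (hc : Pairwise fun x x' => ∀ᶠ j in l, c j x ≠ c j x') (s : Set X) :
    (s.encard : ℝ≥0∞) ≤ liminf (fun j => ((c j '' s).encard : ℝ≥0∞)) l := by
  have hfinite : ∀ t ⊆ s, t.Finite →
      (t.encard : ℝ≥0∞) ≤ liminf (fun j => ((c j '' s).encard : ℝ≥0∞)) l := by
    intro t hts ht
    refine le_liminf_of_le (by isBoundedDefault) ?_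
    filter_upwards [eventually_injOn_of_pairwise_eventually_ne hc ht] with j hj
    rw [← hj.encard_image]
    exact_mod_cast encard_le_encard (image_mono hts)
  rcases s.finite_or_infinite with hs | hs
  · exact hfinite s subset_rfl hs
  · rw [hs.encard_eq, ENat.toENNReal_top, ← ENNReal.iSup_natCast]
    refine iSup_le fun N => ?_
    obtain ⟨t, hts, htN⟩ :=
      exists_subset_encard_eq (hs.encard_eq ▸ le_top : (N : ℕ∞) ≤ s.encard)
    simpa [htN] using hfinite t hts (finite_of_encard_eq_coe htN)

theorem encard_setOf_mem_eq_tsum_indicator (B : ι → Set Y) (y : Y) :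
    ({i | y ∈ B i}.encard : ℝ≥0∞) = ∑' i, (B i).indicator 1 y := by
  rw [← ENNReal.tsum_set_one, tsum_subtype {i | y ∈ B i} fun _ => (1 : ℝ≥0∞)]
  congr 1 with i

variable [MeasurableSpace Y] [Countable ι]

theorem measurable_encard_setOf_mem {B : ι → Set Y} (hB : ∀ i, MeasurableSet (B i)) :
    Measurable fun y => ({i | y ∈ B i}.encard : ℝ≥0∞) := by
  simp_rw [encard_setOf_mem_eq_tsum_indicator]
  exact .tsum fun i => measurable_one.indicator (hB i)

theorem lintegral_encard_setOf_mem (ν : Measure Y) {B : ι → Set Y}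
    (hB : ∀ i, MeasurableSet (B i)) :
    ∫⁻ y, ({i | y ∈ B i}.encard : ℝ≥0∞) ∂ν = ∑' i, ν (B i) := by
  simp_rw [encard_setOf_mem_eq_tsum_indicator]
  rw [lintegral_tsum fun i => (measurable_one.indicator (hB i)).aemeasurable]
  simp_rw [lintegral_indicator_one (hB _)]

theorem lintegral_encard_fiber_le_liminf [l.IsCountablyGenerated] (ν : Measure Y) (f : X → Y)
    {c : κ → X → ι} (hc : Pairwise fun x x' => ∀ᶠ j in l, c j x ≠ c j x') (A : Set X) :
    ∫⁻ y, ((A ∩ f ⁻¹' {y}).encard : ℝ≥0∞) ∂ν ≤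
      liminf (fun j => ∑' i, ν (f '' (A ∩ c j ⁻¹' {i}))) l := by
  set B : κ → ι → Set Y := fun j i => toMeasurable ν (f '' (A ∩ c j ⁻¹' {i}))
  have hcover : ∀ j y, c j '' (A ∩ f ⁻¹' {y}) ⊆ {i | y ∈ B j i} := by
    rintro j y _ ⟨x, ⟨hxA, rfl⟩, rfl⟩
    exact subset_toMeasurable _ _ ⟨x, ⟨hxA, rfl⟩, rfl⟩
  calc ∫⁻ y, ((A ∩ f ⁻¹' {y}).encard : ℝ≥0∞) ∂ν
      ≤ ∫⁻ y, liminf (fun j => ({i | y ∈ B j i}.encard : ℝ≥0∞)) l ∂ν := by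
        refine lintegral_mono fun y => (encard_le_liminf_encard_image hc _).trans ?_
        exact liminf_le_liminf (.of_forall fun j => by exact_mod_cast encard_le_encard (hcover j y))
    _ ≤ liminf (fun j => ∫⁻ y, ({i | y ∈ B j i}.encard : ℝ≥0∞) ∂ν) l :=
        lintegral_liminf_le fun j =>
          measurable_encard_setOf_mem fun i => measurableSet_toMeasurable _ _
    _ = liminf (fun j => ∑' i, ν (f '' (A ∩ c j ⁻¹' {i}))) l := by
        congr 1 with j
        rw [lintegral_encard_setOf_mem ν fun i => measurableSet_toMeasurable _ _]
        simp only [measure_toMeasurable]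

end FiberCount

theorem tsum_measure_inter_preimage_singleton {X ι : Type*} [MeasurableSpace X] [Countable ι]
    (μ : Measure X) {c : X → ι} (hc : ∀ i, MeasurableSet (c ⁻¹' {i})) (A : Set X) :
    ∑' i, μ (A ∩ c ⁻¹' {i}) = μ A := by
  simp_rw [inter_comm A, ← Measure.restrict_apply (hc _)]
  rw [← measure_iUnion (pairwise_disjoint_fiber c) hc, ← preimage_iUnion, iUnion_of_singleton,
    preimage_univ, Measure.restrict_apply_univ]

theorem lintegral_encard_fiber_le {X Y ι : Type*} [MeasurableSpace X] [MeasurableSpace Y]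
    [Countable ι] (μ : Measure X) (ν : Measure Y) {f : X → Y} {C : ℝ≥0∞}
    (hf : ∀ s, ν (f '' s) ≤ C * μ s) {c : ℕ → X → ι}
    (hc_meas : ∀ j i, MeasurableSet (c j ⁻¹' {i}))
    (hc_sep : Pairwise fun x x' => ∀ᶠ j in atTop, c j x ≠ c j x') (A : Set X) :
    ∫⁻ y, ((A ∩ f ⁻¹' {y}).encard : ℝ≥0∞) ∂ν ≤ C * μ A := by
  have hpartition : ∀ j, ∑' i, ν (f '' (A ∩ c j ⁻¹' {i})) ≤ C * μ A := fun j =>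
    calc ∑' i, ν (f '' (A ∩ c j ⁻¹' {i}))
        ≤ ∑' i, C * μ (A ∩ c j ⁻¹' {i}) := ENNReal.tsum_le_tsum fun i => hf _
      _ = C * μ A := by
        rw [ENNReal.tsum_mul_left, tsum_measure_inter_preimage_singleton μ (hc_meas j)]
  calc ∫⁻ y, ((A ∩ f ⁻¹' {y}).encard : ℝ≥0∞) ∂ν
      ≤ liminf (fun j => ∑' i, ν (f '' (A ∩ c j ⁻¹' {i}))) atTop :=
        lintegral_encard_fiber_le_liminf ν f hc_sep A
    _ ≤ liminf (fun _ => C * μ A) atTop := liminf_le_liminf (.of_forall hpartition)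
    _ = C * μ A := liminf_const _

theorem eventually_floor_natCast_mul_ne {a b : ℝ} (h : a ≠ b) :
    ∀ᶠ j : ℕ in atTop, ⌊(j : ℝ) * a⌋ ≠ ⌊(j : ℝ) * b⌋ := by
  wlog hab : a < b generalizing a b
  · exact (this h.symm (h.lt_or_gt.resolve_left hab)).mono fun _ h => h.symm
  have hgap : ∀ᶠ j : ℕ in atTop, 1 ≤ (j : ℝ) * (b - a) :=
    (tendsto_natCast_atTop_atTop.atTop_mul_const (sub_pos.2 hab)).eventually_ge_atTop 1
  filter_upwards [hgap] with j hj
  have : ⌊(j : ℝ) * a⌋ + 1 ≤ ⌊(j : ℝ) * b⌋ := by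
    rw [← Int.floor_add_one]
    exact Int.floor_le_floor (by linarith)
  omega

/-- `x` lies in the cube `(cubeIndex ι j x + [0, 1)ᶥ) / j`. -/
def cubeIndex (ι : Type*) (j : ℕ) (x : EuclideanSpace ℝ ι) : ι → ℤ :=
  fun d => ⌊(j : ℝ) * x d⌋

theorem measurable_cubeIndex (ι : Type*) [Fintype ι] (j : ℕ) : Measurable (cubeIndex ι j) :=
  measurable_pi_lambda _ fun d =>
    Int.measurable_floor.comp ((EuclideanSpace.proj d).continuous.measurable.const_mul _)

theorem pairwise_eventually_cubeIndex_ne (ι : Type*) :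
    Pairwise fun x x' : EuclideanSpace ℝ ι =>
      ∀ᶠ j in atTop, cubeIndex ι j x ≠ cubeIndex ι j x' := by
  intro x x' hne
  obtain ⟨d, hd⟩ : ∃ d, x d ≠ x' d := by
    by_contra! h
    exact hne (PiLp.ext h)
  exact (eventually_floor_natCast_mul_ne hd).mono fun j hj h => hj (congrFun h d)

theorem stmt3_general (m n : ℕ) (K : NNReal) (f : EuclideanSpace ℝ (Fin m) → EuclideanSpace ℝ (Fin n))
    (hf : LipschitzWith K f) (A : Set (EuclideanSpace ℝ (Fin m)))
    (k : ℝ) (hk : 0 ≤ k) :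
    ∫⁻ y, ((A ∩ f ⁻¹' {y}).encard : ℝ≥0∞) ∂(μH[k]) ≤ (K : ℝ≥0∞) ^ k * μH[k] A :=
  lintegral_encard_fiber_le μH[k] μH[k] (hf.hausdorffMeasure_image_le hk)
    (fun j _ => measurable_cubeIndex _ j (measurableSet_singleton _))
    (pairwise_eventually_cubeIndex_ne _) A

/-- Eilenberg/Federer inequality: for Lipschitz `f : ℝᵐ → ℝⁿ`, a Borel
set `A` and `k ≥ 0`, `∫_{ℝⁿ} #{x ∈ A : f x = y} dH^k(y) ≤ Lip(f)^k · H^k(A)`. -/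
theorem stmt3 (m n : ℕ) (K : NNReal) (f : EuclideanSpace ℝ (Fin m) → EuclideanSpace ℝ (Fin n))
    (hf : LipschitzWith K f) (A : Set (EuclideanSpace ℝ (Fin m))) (hA : MeasurableSet A)
    (k : ℝ) (hk : 0 ≤ k) :
    ∫⁻ y, ((A ∩ f ⁻¹' {y}).encard : ℝ≥0∞) ∂(μH[k]) ≤ (K : ℝ≥0∞) ^ k * μH[k] A :=
  stmt3_general m n K f hf A k hk
end
end
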